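/- Fix a bijection p of the positive integers and a sequence (w_n) with |w_n| < 1 for all n. If Σ_{n≥1} |w_n| < ∞, then: (i) for every θ ∈ ℝ the infinite product ∏_{n≥1} (1 − |w_{n′}|²)/|1 + w_{n′} e^{i n′ Σ_{n−1}(θ)}|² converges absolutely, uniformly in θ, to a positive limit; (ii) the uniform limit Σ of the Σ_N is continuously differentiable and Σ′(θ) equals this infinite product for every θ; and (iii) Σ is strictly increasing, Σ(θ+2π) = Σ(θ)+2π, and the inverse function of Σ is also continuously differentiable, so that σ(e^{iθ}) = e^{iΣ(θ)} is a C¹ diffeomorphism of S¹. -/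

import Mathlib

/-!
`Φ_n(w;·)` moves points by at most `2|w|/(1-|w|)`, and its derivative is the Poisson-type factor
`(1-|w|²)/|1+w e^{inθ}|²`, which lies within `4|w|/(1-|w|)²` of `1`. For `Σ|w_n| < ∞` both bounds
are summable, so `Σ_N` converges uniformly by telescoping, and its derivatives, the partial
products of the factors, converge in the Banach algebra of bounded continuous functions, i.e.
uniformly, to a continuous limit that is positive because the logarithms of the factors are
summable. Uniform convergence of the derivatives makes the limit `Σ` a `C¹` function with this
derivative. As `Σ' > 0` and `Σ - id` is bounded, `Σ` is an increasing bijection of `ℝ`, and the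
inverse function theorem makes its inverse `C¹`.
-/

open Filter

/-- The lift `Φ_n(w; θ) = θ − (2/n)·arctan( Im(w e^{inθ}) / (1 + Re(w e^{inθ})) )`. -/
noncomputable def PhiLift (n : ℕ+) (w : ℂ) (θ : ℝ) : ℝ :=
  θ - (2 / ((n : ℕ) : ℝ)) * Real.arctan
    ((w * Complex.exp ((((n : ℕ) : ℂ)) * (θ : ℂ) * Complex.I)).im /
      (1 + (w * Complex.exp ((((n : ℕ) : ℂ)) * (θ : ℂ) * Complex.I)).re))

/-- `Σ_0(θ) = θ` and `Σ_N = Φ_{N′}(w_{N′};·) ∘ ⋯ ∘ Φ_{1′}(w_{1′};·)`, where `p(n) = n′`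
is a fixed bijection (ordering) of the positive integers. -/
noncomputable def SigLift (p : ℕ+ ≃ ℕ+) (w : ℕ+ → ℂ) : ℕ → ℝ → ℝ
  | 0 => fun θ => θ
  | N + 1 => fun θ =>
      PhiLift (p ⟨N + 1, N.succ_pos⟩) (w (p ⟨N + 1, N.succ_pos⟩)) (SigLift p w N θ)

/-- The `n`-th factor `(1 − |w_{n′}|²)/|1 + w_{n′} e^{i n′ Σ_{n−1}(θ)}|²` of the product
formula for `Σ′`; here `k = 0, 1, 2, …` corresponds to `n = k + 1`. -/
noncomputable def derivFactor (p : ℕ+ ≃ ℕ+) (w : ℕ+ → ℂ) (k : ℕ) (θ : ℝ) : ℝ :=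
  (1 - ‖w (p ⟨k + 1, k.succ_pos⟩)‖ ^ 2) /
    ‖1 + w (p ⟨k + 1, k.succ_pos⟩) *
      Complex.exp ((((p ⟨k + 1, k.succ_pos⟩ : ℕ)) : ℂ) *
        ((SigLift p w k θ : ℝ) : ℂ) * Complex.I)‖ ^ 2

open Complex Finset Topology
open scoped BoundedContinuousFunction

lemma Real.abs_arctan_le_abs (x : ℝ) : |Real.arctan x| ≤ |x| := by
  have h : ∀ y : ℝ, Real.arctan y ≤ |y| := fun y => by
    have := Real.le_tan (Real.arctan_nonneg.2 (abs_nonneg y)) (Real.arctan_lt_pi_div_two |y|)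
    rw [Real.tan_arctan] at this
    exact (Real.arctan_le_arctan_iff.2 (le_abs_self y)).trans this
  have := h (-x)
  rw [Real.arctan_neg, abs_neg] at this
  exact abs_le.2 ⟨by linarith, h x⟩

lemma norm_mul_exp_natCast_mul_ofReal_mul_I (w : ℂ) (n : ℕ) (θ : ℝ) :
    ‖w * exp (n * θ * I)‖ = ‖w‖ := by
  rw [norm_mul, show (n : ℂ) * θ * I = ((n * θ : ℝ) : ℂ) * I by push_cast; ring,
    norm_exp_ofReal_mul_I, mul_one]

lemma one_sub_norm_le_norm_one_add (u : ℂ) : 1 - ‖u‖ ≤ ‖1 + u‖ := by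
  simpa using norm_sub_norm_le (1 : ℂ) (-u)

lemma one_sub_norm_le_one_add_re (u : ℂ) : 1 - ‖u‖ ≤ 1 + u.re := by
  linarith [neg_abs_le u.re, abs_re_le_norm u]

lemma div_sq_norm_one_add_pos {u : ℂ} (hu : ‖u‖ < 1) : 0 < (1 - ‖u‖ ^ 2) / ‖1 + u‖ ^ 2 := by
  have hden : 0 < ‖1 + u‖ := by linarith [one_sub_norm_le_norm_one_add u]
  have hnum : ‖u‖ ^ 2 < 1 := by nlinarith [norm_nonneg u]
  exact div_pos (sub_pos.2 hnum) (pow_pos hden 2)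

lemma abs_div_sq_norm_one_add_sub_one_le {u : ℂ} (hu : ‖u‖ < 1) :
    |(1 - ‖u‖ ^ 2) / ‖1 + u‖ ^ 2 - 1| ≤ 4 * ‖u‖ / (1 - ‖u‖) ^ 2 := by
  set a := ‖u‖
  set b := ‖1 + u‖
  have ha : 0 ≤ a := norm_nonneg u
  have hb₁ : 1 - a ≤ b := one_sub_norm_le_norm_one_add u
  have hb₂ : b ≤ 1 + a := by simpa using norm_add_le 1 u
  have hb : (1 - a) ^ 2 ≤ b ^ 2 := pow_le_pow_left₀ (by linarith) hb₁ 2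
  have hnum : |1 - a ^ 2 - b ^ 2| ≤ 4 * a := abs_le.2 ⟨by nlinarith, by nlinarith⟩
  rw [div_sub_one (pow_pos (by linarith) 2).ne', abs_div, abs_of_nonneg (sq_nonneg b)]
  exact div_le_div₀ (by positivity) hnum (pow_pos (by linarith) 2) hb

lemma Summable.div_one_sub_sq {a : ℕ → ℝ} (ha : Summable a) (h₀ : ∀ k, 0 ≤ a k) :
    Summable fun k => a k / (1 - a k) ^ 2 := by
  refine .of_norm_bounded_eventually_nat (ha.mul_left 4) ?_
  filter_upwards [ha.tendsto_atTop_zero.eventually_le_const (by norm_num : (0 : ℝ) < 1 / 2)]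
    with k hk
  have : 1 / 4 ≤ (1 - a k) ^ 2 := by nlinarith
  rw [Real.norm_eq_abs, abs_of_nonneg (by have := h₀ k; positivity), div_le_iff₀ (by positivity)]
  nlinarith [h₀ k]

theorem exists_tendstoUniformly_of_norm_sub_le {α E : Type*} [NormedAddCommGroup E]
    [CompleteSpace E] {f : ℕ → α → E} {c : ℕ → ℝ} (hc : Summable c)
    (hf : ∀ k x, ‖f (k + 1) x - f k x‖ ≤ c k) :
    ∃ g, TendstoUniformly f g atTop ∧ ∀ x, ‖g x - f 0 x‖ ≤ ∑' k, c k := by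
  refine ⟨fun x => f 0 x + ∑' k, (f (k + 1) x - f k x), ?_, fun x => ?_⟩
  · have h := Metric.tendstoUniformly_iff.1 (tendstoUniformly_tsum_nat hc hf)
    refine Metric.tendstoUniformly_iff.2 fun ε hε => ?_
    filter_upwards [h ε hε] with N hN x
    have := hN x
    rw [sum_range_sub (fun k => f k x), dist_eq_norm] at this
    rw [dist_eq_norm]
    convert this using 2
    abel
  · simpa using tsum_of_norm_bounded hc.hasSum (hf · x)

theorem exists_continuous_tendstoUniformly_prod_range {α R : Type*} [TopologicalSpace α]
    [Nonempty α] [NormedCommRing R] [NormOneClass R] [CompleteSpace R] {F : ℕ → α → R}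
    {b : ℕ → ℝ} (hb : Summable b) (hF : ∀ k, Continuous (F k))
    (hFb : ∀ k x, ‖F k x - 1‖ ≤ b k) :
    ∃ P : α → R, Continuous P ∧
      TendstoUniformly (fun N x => ∏ k ∈ range N, F k x) P atTop := by
  have hb₀ : ∀ k, 0 ≤ b k := fun k => (norm_nonneg _).trans (hFb k (Classical.arbitrary α))
  let G : ℕ → α →ᵇ R := fun k =>
    .ofNormedAddCommGroup (F k · - 1) ((hF k).sub continuous_const) (b k) (hFb k)
  have hG : Summable fun k => ‖G k‖ := hb.of_nonneg_of_le (fun _ => norm_nonneg _)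
    fun k => BoundedContinuousFunction.norm_ofNormedAddCommGroup_le _ (hb₀ k) (hFb k)
  obtain ⟨P, hP⟩ := multipliable_one_add_of_summable hG
  refine ⟨P, P.continuous, ?_⟩
  convert BoundedContinuousFunction.tendsto_iff_tendstoUniformly.1 hP.tendsto_prod_nat using 1
  ext N x
  simp [G]

lemma pos_of_tendsto_prod_range {f : ℕ → ℝ} {l : ℝ} (hf : ∀ k, 0 < f k)
    (hsum : Summable fun k => |f k - 1|)
    (h : Tendsto (fun N => ∏ k ∈ range N, f k) atTop (𝓝 l)) : 0 < l := by
  have hlog : Summable fun k => Real.log (f k) := by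
    simpa using Real.summable_log_one_add_of_summable hsum.of_abs
  have := tendsto_nhds_unique h (Real.hasProd_of_hasSum_log hf hlog.hasSum).tendsto_prod_nat
  exact this ▸ Real.exp_pos _

lemma contDiff_one_of_hasDerivAt {f f' : ℝ → ℝ} (hf : ∀ x, HasDerivAt f (f' x) x)
    (hf' : Continuous f') : ContDiff ℝ 1 f := by
  rw [contDiff_one_iff_deriv, show deriv f = f' from funext fun x => (hf x).deriv]
  exact ⟨fun x => (hf x).differentiableAt, hf'⟩

lemma surjective_of_abs_sub_id_le {S : ℝ → ℝ} (hS : Continuous S) {C : ℝ}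
    (h : ∀ x, |S x - x| ≤ C) : Function.Surjective S :=
  hS.surjective
    (tendsto_atTop_mono (fun x => by dsimp only [id]; linarith [(abs_le.1 (h x)).1])
      (tendsto_atTop_add_const_right _ (-C) tendsto_id))
    (tendsto_atBot_mono (fun x => by dsimp only [id]; linarith [(abs_le.1 (h x)).2])
      (tendsto_atBot_add_const_right _ C tendsto_id))

theorem exists_contDiff_inverse_of_deriv_pos {S S' : ℝ → ℝ} (hS : ∀ x, HasDerivAt S (S' x) x)
    (hS' : Continuous S') (hpos : ∀ x, 0 < S' x) (hsurj : Function.Surjective S) :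
    ∃ T : ℝ → ℝ, Function.LeftInverse T S ∧ Function.RightInverse T S ∧ ContDiff ℝ 1 T := by
  let e := StrictMono.orderIsoOfSurjective S (strictMono_of_hasDerivAt_pos hS hpos) hsurj
  have hT : ∀ y, HasDerivAt e.symm (S' (e.symm y))⁻¹ y := fun y =>
    (hS _).of_local_left_inverse e.symm.continuous.continuousAt (hpos _).ne'
      (.of_forall e.apply_symm_apply)
  exact ⟨e.symm, e.symm_apply_apply, e.apply_symm_apply,
    contDiff_one_of_hasDerivAt hT ((hS'.comp e.symm.continuous).inv₀ fun y => (hpos _).ne')⟩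

lemma hasDerivAt_phiLift (n : ℕ+) {w : ℂ} (hw : ‖w‖ < 1) (θ : ℝ) :
    HasDerivAt (PhiLift n w)
      ((1 - ‖w‖ ^ 2) / ‖1 + w * exp (((n : ℕ) : ℂ) * θ * I)‖ ^ 2) θ := by
  set u : ℝ → ℂ := fun t => w * exp (((n : ℕ) : ℂ) * t * I)
  have hu : HasDerivAt u (w * (exp (((n : ℕ) : ℂ) * θ * I) * ((n : ℕ) * I))) θ :=
    (((((hasDerivAt_id θ).ofReal_comp.const_mul ((n : ℕ) : ℂ)).mul_const I).cexp.const_mul w)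
      |>.congr_deriv (by simp))
  have hre : HasDerivAt (fun t => (u t).re) (-(n : ℕ) * (u θ).im) θ :=
    (reCLM.hasFDerivAt.comp_hasDerivAt θ hu).congr_deriv (by
      simp only [reCLM_apply, mul_re, mul_im, natCast_re, natCast_im, I_re, I_im, u]; ring)
  have him : HasDerivAt (fun t => (u t).im) ((n : ℕ) * (u θ).re) θ :=
    (imCLM.hasFDerivAt.comp_hasDerivAt θ hu).congr_deriv (by
      simp only [imCLM_apply, mul_re, mul_im, natCast_re, natCast_im, I_re, I_im, u]; ring)
  have hpos : 0 < 1 + (u θ).re :=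
    (sub_pos.2 (by rwa [← norm_mul_exp_natCast_mul_ofReal_mul_I w n θ] at hw)).trans_le
      (one_sub_norm_le_one_add_re _)
  refine ((hasDerivAt_id θ).sub
    (((him.div (hre.const_add 1) hpos.ne').arctan).const_mul (2 / ((n : ℕ) : ℝ)))).congr_deriv ?_
  have hnum : ‖w‖ ^ 2 = (u θ).re ^ 2 + (u θ).im ^ 2 := by
    rw [← norm_mul_exp_natCast_mul_ofReal_mul_I w n θ, Complex.sq_norm, normSq_apply]; ring
  have hden : ‖1 + u θ‖ ^ 2 = (1 + (u θ).re) ^ 2 + (u θ).im ^ 2 := by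
    rw [Complex.sq_norm, normSq_apply, add_re, add_im, one_re, one_im, zero_add]; ring
  have hn : ((n : ℕ) : ℝ) ≠ 0 := by positivity
  change _ = (1 - ‖w‖ ^ 2) / ‖1 + u θ‖ ^ 2
  rw [hnum, hden, Pi.div_apply]
  generalize (u θ).re = x at *
  generalize (u θ).im = y at *
  field_simp
  ring

lemma abs_phiLift_sub_le (n : ℕ+) {w : ℂ} (hw : ‖w‖ < 1) (θ : ℝ) :
    |PhiLift n w θ - θ| ≤ 2 * ‖w‖ / (1 - ‖w‖) := by
  set u := w * exp (((n : ℕ) : ℂ) * θ * I)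
  have hnorm : ‖u‖ = ‖w‖ := norm_mul_exp_natCast_mul_ofReal_mul_I w n θ
  have hre : 1 - ‖w‖ ≤ 1 + u.re := hnorm ▸ one_sub_norm_le_one_add_re u
  have hquot : |u.im / (1 + u.re)| ≤ ‖w‖ / (1 - ‖w‖) := by
    rw [abs_div, abs_of_pos ((sub_pos.2 hw).trans_le hre)]
    exact div_le_div₀ (norm_nonneg w) (hnorm ▸ abs_im_le_norm u) (sub_pos.2 hw) hre
  have hn : 2 / ((n : ℕ) : ℝ) ≤ 2 := div_le_self zero_le_two (by exact_mod_cast n.pos)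
  calc |PhiLift n w θ - θ| = 2 / ((n : ℕ) : ℝ) * |Real.arctan (u.im / (1 + u.re))| := by
        rw [PhiLift, sub_sub_cancel_left, abs_neg, abs_mul,
          abs_of_nonneg (by positivity : (0 : ℝ) ≤ 2 / ((n : ℕ) : ℝ))]
    _ ≤ 2 * (‖w‖ / (1 - ‖w‖)) :=
        mul_le_mul hn ((Real.abs_arctan_le_abs _).trans hquot) (abs_nonneg _) zero_le_two
    _ = 2 * ‖w‖ / (1 - ‖w‖) := by ring

lemma phiLift_add_two_pi (n : ℕ+) (w : ℂ) (θ : ℝ) :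
    PhiLift n w (θ + 2 * Real.pi) = PhiLift n w θ + 2 * Real.pi := by
  have h : ((n : ℕ) : ℂ) * ((θ + 2 * Real.pi : ℝ) : ℂ) * I
      = ((n : ℕ) : ℂ) * θ * I + ((n : ℕ) : ℤ) * (2 * Real.pi * I) := by
    push_cast; ring
  simp only [PhiLift, h, exp_add, exp_int_mul_two_pi_mul_I, mul_one]
  ring

section SigLift

variable (p : ℕ+ ≃ ℕ+) {w : ℕ+ → ℂ}

lemma sigLift_add_two_pi (N : ℕ) (θ : ℝ) :
    SigLift p w N (θ + 2 * Real.pi) = SigLift p w N θ + 2 * Real.pi := by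
  induction N with
  | zero => rfl
  | succ N ih => simp only [SigLift, ih, phiLift_add_two_pi]

lemma hasDerivAt_sigLift (hw : ∀ n, ‖w n‖ < 1) (N : ℕ) (θ : ℝ) :
    HasDerivAt (SigLift p w N) (∏ k ∈ range N, derivFactor p w k θ) θ := by
  induction N with
  | zero => simpa [SigLift] using hasDerivAt_id' θ
  | succ N ih =>
    rw [prod_range_succ, mul_comm]
    exact (hasDerivAt_phiLift _ (hw _) _).comp θ ih

lemma continuous_derivFactor (hw : ∀ n, ‖w n‖ < 1) (k : ℕ) : Continuous (derivFactor p w k) := by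
  have hSig : Continuous (SigLift p w k) :=
    continuous_iff_continuousAt.2 fun θ => (hasDerivAt_sigLift p hw k θ).continuousAt
  refine continuous_const.div (by fun_prop) fun θ => ?_
  have := one_sub_norm_le_norm_one_add (w (p ⟨k + 1, k.succ_pos⟩) *
    exp (((p ⟨k + 1, k.succ_pos⟩ : ℕ) : ℂ) * (SigLift p w k θ : ℂ) * I))
  rw [norm_mul_exp_natCast_mul_ofReal_mul_I] at this
  exact (pow_pos (by linarith [hw (p ⟨k + 1, k.succ_pos⟩)]) 2).ne'

lemma derivFactor_pos (hw : ∀ n, ‖w n‖ < 1) (k : ℕ) (θ : ℝ) : 0 < derivFactor p w k θ := by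
  have := div_sq_norm_one_add_pos ((norm_mul_exp_natCast_mul_ofReal_mul_I _
    (p ⟨k + 1, k.succ_pos⟩) (SigLift p w k θ)).trans_lt (hw (p ⟨k + 1, k.succ_pos⟩)))
  rwa [norm_mul_exp_natCast_mul_ofReal_mul_I] at this

lemma abs_derivFactor_sub_one_le (hw : ∀ n, ‖w n‖ < 1) (k : ℕ) (θ : ℝ) :
    |derivFactor p w k θ - 1| ≤
      4 * ‖w (p ⟨k + 1, k.succ_pos⟩)‖ / (1 - ‖w (p ⟨k + 1, k.succ_pos⟩)‖) ^ 2 := by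
  have := abs_div_sq_norm_one_add_sub_one_le ((norm_mul_exp_natCast_mul_ofReal_mul_I _
    (p ⟨k + 1, k.succ_pos⟩) (SigLift p w k θ)).trans_lt (hw (p ⟨k + 1, k.succ_pos⟩)))
  rwa [norm_mul_exp_natCast_mul_ofReal_mul_I] at this

lemma abs_sigLift_succ_sub_le (hw : ∀ n, ‖w n‖ < 1) (k : ℕ) (θ : ℝ) :
    |SigLift p w (k + 1) θ - SigLift p w k θ| ≤
      4 * ‖w (p ⟨k + 1, k.succ_pos⟩)‖ / (1 - ‖w (p ⟨k + 1, k.succ_pos⟩)‖) ^ 2 := by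
  have ha := hw (p ⟨k + 1, k.succ_pos⟩)
  have ha₀ := norm_nonneg (w (p ⟨k + 1, k.succ_pos⟩))
  -- weakened to the bound of `abs_derivFactor_sub_one_le`, so that one majorant serves both
  refine (abs_phiLift_sub_le _ ha _).trans ?_
  rw [div_le_div_iff₀ (by linarith) (pow_pos (by linarith) 2)]
  nlinarith [mul_nonneg (mul_nonneg ha₀ (sub_pos.2 ha).le) (add_nonneg zero_le_one ha₀)]

end SigLift

/-- If `Σ |w_n| < ∞`, then: (i) the infinite product
`∏ (1 − |w_{n′}|²)/|1 + w_{n′} e^{i n′ Σ_{n−1}(θ)}|²` converges absolutely, uniformly in `θ`,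
to a positive limit; (ii) the uniform limit `Σ` of the `Σ_N` is `C¹` with `Σ′` equal to this
product; (iii) `Σ` is strictly increasing with `Σ(θ+2π) = Σ(θ)+2π` and `C¹` inverse, so that
`σ(e^{iθ}) = e^{iΣ(θ)}` is a `C¹` diffeomorphism of the circle. -/
theorem sigLift_c1_of_l1 (p : ℕ+ ≃ ℕ+) (w : ℕ+ → ℂ)
    (hw : ∀ n, ‖w n‖ < 1)
    (hsum : Summable fun n : ℕ+ => ‖w n‖) :
    ∃ L S T : ℝ → ℝ,
      (∀ θ, 0 < L θ) ∧
      (∀ θ, Summable fun k : ℕ => |derivFactor p w k θ - 1|) ∧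
      TendstoUniformly (fun N θ => ∏ k ∈ Finset.range N, derivFactor p w k θ) L atTop ∧
      TendstoUniformly (fun N => SigLift p w N) S atTop ∧
      ContDiff ℝ 1 S ∧ (∀ θ, deriv S θ = L θ) ∧
      StrictMono S ∧ (∀ θ : ℝ, S (θ + 2 * Real.pi) = S θ + 2 * Real.pi) ∧
      (∀ θ, T (S θ) = θ) ∧ (∀ θ, S (T θ) = θ) ∧ ContDiff ℝ 1 T := by
  have hb : Summable fun k : ℕ =>
      4 * ‖w (p ⟨k + 1, k.succ_pos⟩)‖ / (1 - ‖w (p ⟨k + 1, k.succ_pos⟩)‖) ^ 2 := by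
    have := (Equiv.pnatEquivNat.symm.trans p).summable_iff.2 hsum
    exact ((this.div_one_sub_sq fun _ => norm_nonneg _).mul_left 4).congr fun k =>
      (mul_div_assoc _ _ _).symm
  have hfac : ∀ θ, Summable fun k : ℕ => |derivFactor p w k θ - 1| := fun θ =>
    hb.of_nonneg_of_le (fun _ => abs_nonneg _) (abs_derivFactor_sub_one_le p hw · θ)
  obtain ⟨S, hS, hS_id⟩ := exists_tendstoUniformly_of_norm_sub_le (f := SigLift p w) hb
    (by simpa only [Real.norm_eq_abs] using abs_sigLift_succ_sub_le p hw)
  obtain ⟨L, hL_cont, hL⟩ :=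
    exists_continuous_tendstoUniformly_prod_range hb (continuous_derivFactor p hw)
      (abs_derivFactor_sub_one_le p hw)
  have hL_pos : ∀ θ, 0 < L θ := fun θ =>
    pos_of_tendsto_prod_range (derivFactor_pos p hw · θ) (hfac θ) (hL.tendsto_at θ)
  have hS' : ∀ θ, HasDerivAt S (L θ) θ :=
    hasDerivAt_of_tendstoUniformly hL (.of_forall (hasDerivAt_sigLift p hw)) hS.tendsto_at
  obtain ⟨T, hTS, hST, hT⟩ := exists_contDiff_inverse_of_deriv_pos hS' hL_cont hL_pos
    (surjective_of_abs_sub_id_le (continuous_iff_continuousAt.2 fun θ => (hS' θ).continuousAt)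
      (by simpa only [Real.norm_eq_abs, SigLift] using hS_id))
  refine ⟨L, S, T, hL_pos, hfac, hL, hS, contDiff_one_of_hasDerivAt hS' hL_cont,
    fun θ => (hS' θ).deriv, strictMono_of_hasDerivAt_pos hS' hL_pos, fun θ => ?_, hTS, hST, hT⟩
  refine tendsto_nhds_unique (hS.tendsto_at _) ?_
  simpa only [sigLift_add_two_pi] using (hS.tendsto_at θ).add_const (2 * Real.pi)
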